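/- arXiv:math/0603152 — 2 statements merged into one kernel-verified Lean document; each statement's English description precedes it below -/
import Mathlib

section
/- Let G be a finite abelian group. Then the group determinant factors as det(G) = ∏_{ρ} (∑_{g ∈ G} ρ(g)·X_g), where the product runs over all characters ρ : G → ℂ* of G. -/
open MvPolynomial

section aux

variable {G : Type*} [CommGroup G] [Fintype G] [DecidableEq G]

private lemma sum_char_eq_zero (ψ : G →* ℂˣ) (hψ : ψ ≠ 1) :
    ∑ k : G, (ψ k : ℂ) = 0 := by
  have h : (Units.coeHom ℂ).comp ψ ≠ 1 := by
    intro h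
    apply hψ
    ext g
    have h2 : (ψ g : ℂ) = 1 := by simpa using congrFun (congrArg DFunLike.coe h) g
    simpa using h2
  simpa using sum_hom_units_eq_zero ((Units.coeHom ℂ).comp ψ) h

end aux

/-- For a finite abelian group `G`, the group determinant (the determinant
of the matrix with `(g, h)`-entry `X_{g⁻¹h}`) factors as the product, over all characters
`χ : G → ℂˣ`, of the linear forms `∑_g χ(g)·X_g`. -/
theorem stmt10 (G : Type*) [CommGroup G] [Fintype G] [DecidableEq G]
    (χs : Finset (G →* ℂˣ)) (hχs : ∀ χ : G →* ℂˣ, χ ∈ χs) :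
    (Matrix.of fun g h : G => (X (g⁻¹ * h) : MvPolynomial G ℂ)).det
      = ∏ χ ∈ χs, ∑ g : G, C ((χ g : ℂ)) * X g := by
  classical
  -- enough roots of unity in ℂ
  haveI : NeZero ((Monoid.exponent G : ℂ)) :=
    ⟨Nat.cast_ne_zero.mpr Monoid.exponent_ne_zero_of_finite⟩
  obtain ⟨e'⟩ := CommGroup.monoidHom_mulEquiv_of_hasEnoughRootsOfUnity G ℂ
  set e : G ≃ (G →* ℂˣ) := e'.symm.toEquiv with he
  haveI : Fintype (G →* ℂˣ) := Fintype.ofEquiv G e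
  have hχs' : χs = Finset.univ := Finset.eq_univ_iff_forall.mpr hχs
  rw [hχs']
  -- the character-table matrix over ℂ
  set P : Matrix G G ℂ := Matrix.of fun g h => ((e h) g : ℂ) with hP
  set Q : Matrix G G ℂ := Matrix.of fun g h => (((e g) h)⁻¹ : ℂˣ) with hQ
  have hQP : Q * P = (Fintype.card G : ℂ) • 1 := by
    ext g h
    simp only [Matrix.mul_apply, hQ, hP, Matrix.of_apply, Matrix.smul_apply, Matrix.one_apply]
    have key : ∀ k : G, ((((e g) k)⁻¹ : ℂˣ) : ℂ) * ((e h) k : ℂ)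
        = ((((e g)⁻¹ * (e h)) k : ℂˣ) : ℂ) := by
      intro k; simp
    rw [Finset.sum_congr rfl fun k _ => key k]
    by_cases hgh : g = h
    · subst hgh
      simp
    · have hne : (e g)⁻¹ * (e h) ≠ 1 := by
        intro hc
        exact hgh (e.injective (inv_mul_eq_one.mp hc))
      rw [sum_char_eq_zero _ hne]
      simp [hgh]
  have hdetP : P.det ≠ 0 := by
    intro h0
    have := congrArg Matrix.det hQP
    rw [Matrix.det_mul, h0, mul_zero, Matrix.det_smul, Matrix.det_one, mul_one] at this
    have hcard : ((Fintype.card G : ℂ)) ^ Fintype.card G ≠ 0 := by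
      apply pow_ne_zero
      exact_mod_cast Fintype.card_ne_zero
    exact hcard this.symm
  -- linear forms
  set L : (G →* ℂˣ) → MvPolynomial G ℂ := fun χ => ∑ g : G, C ((χ g : ℂ)) * X g with hL
  set M : Matrix G G (MvPolynomial G ℂ) :=
    Matrix.of fun g h : G => (X (g⁻¹ * h) : MvPolynomial G ℂ) with hM
  have key : M * P.map C = P.map C * Matrix.diagonal (fun h => L (e h)) := by
    apply Matrix.ext
    intro g h
    rw [Matrix.mul_diagonal, Matrix.mul_apply]
    simp only [Matrix.map_apply, hM, hP, hL, Matrix.of_apply]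
    rw [Finset.mul_sum]
    rw [← Equiv.sum_comp (Equiv.mulLeft g) (fun k => X (g⁻¹ * k) * C ((e h) k : ℂ))]
    apply Finset.sum_congr rfl
    intro k _
    simp only [Equiv.coe_mulLeft]
    rw [inv_mul_cancel_left]
    rw [map_mul, Units.val_mul, map_mul]
    ring
  have hdet := congrArg Matrix.det key
  rw [Matrix.det_mul, Matrix.det_mul, Matrix.det_diagonal] at hdet
  have hPm : (P.map C).det = C P.det := ((C : ℂ →+* MvPolynomial G ℂ).map_det P).symm
  rw [hPm, mul_comm (C P.det)] at hdet
  have hCne : (C P.det : MvPolynomial G ℂ) ≠ 0 := by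
    simpa using hdetP
  have hMdet : M.det = ∏ h : G, L (e h) := mul_right_cancel₀ hCne hdet
  rw [hMdet]
  exact Equiv.prod_comp e L
end

section
/- Let G be a finite group, H ≤ G with left coset representatives g₁ = 1, g₂, …, g_k, and ρ : G → GL(V) a representation over a field. In the polynomial ring with one variable Y_s for each element s of the partition S = {HgH ∪ Hg⁻¹H}, the matrix π^sym_H(M(ρ)) = ∑_{g∈G} ρ(g)·Y_{σ(g)} factors as (∑_{i=1}^k ρ(g_i)·Y_{σ(g_i)}) · (∑_{h∈H} ρ(h)), and the first factor becomes the identity matrix under the specialization Y_H = 1, Y_s = 0 for s ≠ H; hence rank(π^sym_H(M(ρ))) = rank(∑_{h∈H} ρ(h)) after any generic specialization (in particular, over the fraction field, rank π^sym_H(M(ρ)) = rank ∑_{h∈H} ρ(h)). -/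
/-!
Splitting `G` into left cosets `gᵢH`, every `g` is uniquely `gᵢ h`, and `σ(gᵢ h) = σ(gᵢ)` since
`σ` is right `H`-invariant; with `ρ(gᵢ h) = ρ(gᵢ) ρ(h)` the sum over `G` factors. Under
`Y_H ↦ 1`, `Y_s ↦ 0` only the representative lying in `H`, namely `g₁ = 1`, survives, so the first
factor specializes to `1`. Its determinant is therefore a nonzero polynomial, a unit of the
fraction field, and multiplying by it does not change the rank; finally, rank is invariant under
the field extension `F → Frac F[Y]`.
-/

open MvPolynomial
open scoped Pointwise

open DoubleCoset in
def symmDoubleCoset {G : Type*} [Group G] (H : Subgroup G) (g : G) : Set G :=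
  doubleCoset g H H ∪ doubleCoset g⁻¹ H H

section SymmDoubleCoset

open DoubleCoset

variable {G : Type*} [Group G] {H : Subgroup G}

theorem symmDoubleCoset_mul_right (g : G) {h : G} (hh : h ∈ H) :
    symmDoubleCoset H (g * h) = symmDoubleCoset H g := by
  have hgh : g * h ∈ doubleCoset g H H :=
    mem_doubleCoset.2 ⟨1, H.one_mem, h, hh, by rw [one_mul]⟩
  have hhg : (g * h)⁻¹ ∈ doubleCoset g⁻¹ H H :=
    mem_doubleCoset.2 ⟨h⁻¹, H.inv_mem hh, 1, H.one_mem, by rw [mul_inv_rev, mul_one]⟩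
  rw [symmDoubleCoset, symmDoubleCoset, doubleCoset_eq_of_mem hgh, doubleCoset_eq_of_mem hhg]

theorem doubleCoset_one (H : Subgroup G) : doubleCoset (1 : G) H H = H := by
  simp [doubleCoset]

theorem symmDoubleCoset_eq_self_iff {g : G} : symmDoubleCoset H g = H ↔ g ∈ H := by
  constructor
  · intro hg
    rw [← SetLike.mem_coe, ← hg]
    exact Or.inl (mem_doubleCoset_self H H g)
  · intro hg
    rw [← one_mul g, symmDoubleCoset_mul_right 1 hg, symmDoubleCoset, inv_one, doubleCoset_one,
      Set.union_self]

end SymmDoubleCoset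

section CosetRepresentatives

variable {G ι : Type*} [Group G] {H : Subgroup G} {r : ι → G}

theorem bijective_mul_of_existsUnique_inv_mul_mem (hr : ∀ x : G, ∃! i, (r i)⁻¹ * x ∈ H) :
    Function.Bijective (fun p : ι × H => r p.1 * p.2) := by
  constructor
  · rintro ⟨i, h⟩ ⟨j, h'⟩ (heq : r i * h = r j * h')
    have hij : i = j := by
      refine (hr (r i * h)).unique (by simp) ?_
      rw [heq, inv_mul_cancel_left]
      exact h'.2
    subst hij
    simpa using heq
  · intro x
    obtain ⟨i, hi, -⟩ := hr x
    exact ⟨⟨i, ⟨_, hi⟩⟩, mul_inv_cancel_left _ _⟩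

theorem mem_iff_eq_of_existsUnique_inv_mul_mem (hr : ∀ x : G, ∃! i, (r i)⁻¹ * x ∈ H)
    {i₀ : ι} (hi₀ : r i₀ = 1) {i : ι} : r i ∈ H ↔ i = i₀ := by
  refine ⟨fun hi => (hr 1).unique (by simpa using hi) (by simp [hi₀]), ?_⟩
  rintro rfl
  rw [hi₀]
  exact H.one_mem

variable [Fintype ι] {m A : Type*} [Fintype m] [DecidableEq m] [CommSemiring A]

theorem sum_smul_eq_one_of_existsUnique (hr : ∀ x : G, ∃! i, (r i)⁻¹ * x ∈ H) {i₀ : ι}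
    (hi₀ : r i₀ = 1) (ρ : G →* Matrix m m A) (w : G → A) (hw₁ : w 1 = 1)
    (hw₀ : ∀ g ∉ H, w g = 0) :
    ∑ i, w (r i) • ρ (r i) = 1 := by
  rw [Finset.sum_eq_single i₀, hi₀, hw₁, map_one, one_smul]
  · intro i _ hi
    rw [hw₀ _ (mt (mem_iff_eq_of_existsUnique_inv_mul_mem hr hi₀).1 hi), zero_smul]
  · exact absurd (Finset.mem_univ i₀)

variable [Fintype G] [Fintype H]

theorem sum_eq_sum_sum_mul_of_existsUnique {M : Type*} [AddCommMonoid M]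
    (hr : ∀ x : G, ∃! i, (r i)⁻¹ * x ∈ H) (f : G → M) :
    ∑ g, f g = ∑ i, ∑ h : H, f (r i * h) := by
  rw [← Fintype.sum_prod_type']
  exact (Fintype.sum_bijective _ (bijective_mul_of_existsUnique_inv_mul_mem hr) _ _
    fun _ => rfl).symm

theorem sum_smul_eq_mul_sum_of_existsUnique (hr : ∀ x : G, ∃! i, (r i)⁻¹ * x ∈ H)
    (ρ : G →* Matrix m m A) (w : G → A) (hw : ∀ g, ∀ h ∈ H, w (g * h) = w g) :
    ∑ g, w g • ρ g = (∑ i, w (r i) • ρ (r i)) * ∑ h : H, ρ h := by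
  rw [Finset.sum_mul_sum, sum_eq_sum_sum_mul_of_existsUnique hr]
  simp only [map_mul, smul_mul_assoc, fun i (h : H) => hw (r i) h h.2]

end CosetRepresentatives

theorem map_aeval_sum_X_smul_map_C {ι σ m n R : Type*} [Fintype ι] [CommSemiring R]
    (s : ι → σ) (M : ι → Matrix m n R) (v : σ → R) :
    (∑ i, (X (s i) : MvPolynomial σ R) • (M i).map C).map (aeval v) = ∑ i, v (s i) • M i := by
  ext a b
  simp [Matrix.sum_apply]

namespace Matrix

theorem rank_fromBlocks_one_zero {m n K : Type*} [Fintype m] [Fintype n] [DecidableEq m]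
    [Field K] : (fromBlocks (1 : Matrix m m K) 0 0 (0 : Matrix n n K)).rank = Fintype.card m := by
  classical
  rw [← diagonal_one, ← diagonal_zero, fromBlocks_diagonal, rank_diagonal, Fintype.card_subtype,
    Finset.card_filter, Fintype.sum_sum_type]
  simp

variable {m : Type*} [Fintype m] [DecidableEq m]

theorem rank_map_of_field {F K : Type*} [Field F] [Field K] (f : F →+* K) (M : Matrix m m F) :
    (M.map f).rank = M.rank := by
  obtain ⟨V, U, e, hV, hU, hN⟩ := M.exists_rank_normal_form
  have hN' : V.map f * M.map f * U.map f = (fromBlocks 1 0 0 0).submatrix e e := by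
    rw [← Matrix.map_mul, ← Matrix.map_mul, hN, ← submatrix_map, fromBlocks_map,
      Matrix.map_one f f.map_zero f.map_one, Matrix.map_zero f f.map_zero,
      Matrix.map_zero f f.map_zero, Matrix.map_zero f f.map_zero]
  have hVf : IsUnit (V.map f).det := (isUnit_iff_isUnit_det _).1 (hV.map f.mapMatrix)
  have hUf : IsUnit (U.map f).det := (isUnit_iff_isUnit_det _).1 (hU.map f.mapMatrix)
  rw [← rank_mul_eq_right_of_isUnit_det _ _ hVf, ← rank_mul_eq_left_of_isUnit_det _ _ hUf, hN',
    rank_submatrix, rank_fromBlocks_one_zero, Fintype.card_fin]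

theorem det_ne_zero_of_map_eq_one {R S : Type*} [CommRing R] [CommRing S] [Nontrivial S]
    (ψ : R →+* S) {B : Matrix m m R} (hB : B.map ψ = 1) : B.det ≠ 0 := by
  intro h
  have := ψ.map_det B
  rw [h, map_zero, RingHom.mapMatrix_apply, hB, det_one] at this
  exact zero_ne_one this

theorem rank_map_mul_of_det_ne_zero {n R K : Type*} [Fintype n] [CommRing R] [Field K]
    (f : R →+* K) (hf : Function.Injective f) {B : Matrix m m R} (hB : B.det ≠ 0)
    (D : Matrix m n R) : ((B * D).map f).rank = (D.map f).rank := by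
  have hdet : IsUnit (B.map f).det := by
    rw [← RingHom.mapMatrix_apply, ← RingHom.map_det]
    exact isUnit_iff_ne_zero.2 ((map_ne_zero_iff f hf).2 hB)
  rw [Matrix.map_mul, rank_mul_eq_right_of_isUnit_det _ _ hdet]

end Matrix

/-- Let `g₁ = 1, …, g_k` be left coset representatives of `H ≤ G` and `ρ` a
matrix representation of `G` over a field.  With one variable `Y_s` per part
`s = HgH ∪ Hg⁻¹H` of the partition `S`, the matrix
`π^sym_H(M(ρ)) = ∑_{g∈G} Y_{σ(g)} • ρ(g)` factors as
`(∑ᵢ Y_{σ(gᵢ)} • ρ(gᵢ)) · (∑_{h∈H} ρ(h))`; the first factor specializes to the identity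
under `Y_H = 1, Y_s = 0 (s ≠ H)`; and over the fraction field
`rank π^sym_H(M(ρ)) = rank ∑_{h∈H} ρ(h)`. -/
theorem stmt16 (F : Type*) [Field F] (G : Type*) [Group G] [Fintype G]
    [DecidableEq (Set G)] (H : Subgroup G) [Fintype H]
    (k : ℕ) (hk : 0 < k) (gr : Fin k → G) (hg1 : gr ⟨0, hk⟩ = 1)
    (hreps : ∀ x : G, ∃! i : Fin k, (gr i)⁻¹ * x ∈ H)
    (σg : G → Set G)
    (hσ : ∀ x : G, σg x = (H : Set G) * ({x} : Set G) * (H : Set G) ∪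
        (H : Set G) * ({x⁻¹} : Set G) * (H : Set G))
    (n : ℕ) (ρ : G →* Matrix (Fin n) (Fin n) F) :
    (∑ g : G, (X (σg g) : MvPolynomial (Set G) F) • (ρ g).map (C : F → MvPolynomial (Set G) F))
        = (∑ i : Fin k,
            (X (σg (gr i)) : MvPolynomial (Set G) F) • (ρ (gr i)).map (C : F → MvPolynomial (Set G) F))
          * (∑ h : H, (ρ (h : G)).map (C : F → MvPolynomial (Set G) F)) ∧
    (∑ i : Fin k,
        (X (σg (gr i)) : MvPolynomial (Set G) F) • (ρ (gr i)).map (C : F → MvPolynomial (Set G) F)).map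
        (aeval fun s : Set G => if s = (H : Set G) then (1 : F) else 0) = 1 ∧
    ((∑ g : G, (X (σg g) : MvPolynomial (Set G) F) • (ρ g).map (C : F → MvPolynomial (Set G) F)).map
        (algebraMap (MvPolynomial (Set G) F) (FractionRing (MvPolynomial (Set G) F)))).rank
      = (∑ h : H, ρ (h : G)).rank := by
  obtain rfl : σg = symmDoubleCoset H := funext hσ
  have hfactor : ∑ g, (X (symmDoubleCoset H g) : MvPolynomial (Set G) F) • (ρ g).map C =
      (∑ i, X (symmDoubleCoset H (gr i)) • (ρ (gr i)).map C) * ∑ h : H, (ρ h).map C :=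
    sum_smul_eq_mul_sum_of_existsUnique hreps (C.mapMatrix.toMonoidHom.comp ρ) _
      fun g h hh => by rw [symmDoubleCoset_mul_right g hh]
  have hspec := (map_aeval_sum_X_smul_map_C (fun i => symmDoubleCoset H (gr i))
      (fun i => ρ (gr i)) fun s : Set G => if s = (H : Set G) then (1 : F) else 0).trans <|
    sum_smul_eq_one_of_existsUnique hreps hg1 ρ (fun g => if symmDoubleCoset H g = H then 1 else 0)
      (by simp [symmDoubleCoset_eq_self_iff]) fun g hg => by simp [symmDoubleCoset_eq_self_iff, hg]
  refine ⟨hfactor, hspec, ?_⟩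
  have hsum : ∑ h : H, (ρ h).map (C : F → MvPolynomial (Set G) F) = (∑ h : H, ρ h).map C :=
    (map_sum C.mapMatrix _ _).symm
  rw [hfactor, Matrix.rank_map_mul_of_det_ne_zero _ (IsFractionRing.injective _ _)
      (Matrix.det_ne_zero_of_map_eq_one (aeval _).toRingHom hspec),
    hsum, Matrix.map_map, ← RingHom.coe_comp, Matrix.rank_map_of_field]
end
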